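/- Near-equidistant instances: let 0 ≤ ε < 2/5 and consider any 5-agent instance such that |P i − 1/5| ≤ ε for all i. Then PCD ≤ (6/5) / (6/5 − 3ε) · OPT. -/
import Mathlib


open Finset

/-- Position of agent `i` on the unit circle: the image of the partial sum
`∑_{j < i} d j`, so that `d i` is the clockwise arc from agent `i` to agent `i+1`. -/
noncomputable def pos (d : Fin 5 → ℝ) (i : Fin 5) : AddCircle (1 : ℝ) :=
  ((∑ j ∈ Finset.Iio i, d j : ℝ) : AddCircle (1 : ℝ))

/-- Social cost of placing the facility at `a`. -/
noncomputable def SC (d : Fin 5 → ℝ) (a : AddCircle (1 : ℝ)) : ℝ :=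
  ∑ i : Fin 5, dist (pos d i) a

/-- Social cost of placing the facility at agent `i`'s location. -/
noncomputable def C (d : Fin 5 → ℝ) (i : Fin 5) : ℝ := SC d (pos d i)

/-- The optimal social cost. -/
noncomputable def OPT (d : Fin 5 → ℝ) : ℝ := ⨅ a : AddCircle (1 : ℝ), SC d a

/-- The length of the arc facing agent `i` (indices mod 5). -/
noncomputable def P (d : Fin 5 → ℝ) (i : Fin 5) : ℝ := d (i + 2)

/-- Expected social cost of the PCD mechanism. -/
noncomputable def PCD (d : Fin 5 → ℝ) : ℝ := ∑ i : Fin 5, P d i * C d i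

lemma pos0 (d : Fin 5 → ℝ) : pos d 0 = ((0 : ℝ) : AddCircle (1:ℝ)) := by
  have h : (∑ j ∈ Finset.Iio (0:Fin 5), d j) = 0 := by
    rw [show Finset.Iio (0:Fin 5) = ∅ from by decide]; simp
  rw [pos, h]

lemma pos1 (d : Fin 5 → ℝ) : pos d 1 = ((d 0 : ℝ) : AddCircle (1:ℝ)) := by
  have h : (∑ j ∈ Finset.Iio (1:Fin 5), d j) = d 0 := by
    rw [show Finset.Iio (1:Fin 5) = {0} from by decide]; simp
  rw [pos, h]

lemma pos2 (d : Fin 5 → ℝ) : pos d 2 = ((d 0 + d 1 : ℝ) : AddCircle (1:ℝ)) := by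
  have h : (∑ j ∈ Finset.Iio (2:Fin 5), d j) = d 0 + d 1 := by
    rw [show Finset.Iio (2:Fin 5) = {0, 1} from by decide]; simp [Finset.sum_insert, add_assoc]
  rw [pos, h]

lemma pos3 (d : Fin 5 → ℝ) : pos d 3 = ((d 0 + d 1 + d 2 : ℝ) : AddCircle (1:ℝ)) := by
  have h : (∑ j ∈ Finset.Iio (3:Fin 5), d j) = d 0 + d 1 + d 2 := by
    rw [show Finset.Iio (3:Fin 5) = {0, 1, 2} from by decide]; simp [Finset.sum_insert, add_assoc]
  rw [pos, h]

lemma pos4 (d : Fin 5 → ℝ) : pos d 4 = ((d 0 + d 1 + d 2 + d 3 : ℝ) : AddCircle (1:ℝ)) := by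
  have h : (∑ j ∈ Finset.Iio (4:Fin 5), d j) = d 0 + d 1 + d 2 + d 3 := by
    rw [show Finset.Iio (4:Fin 5) = {0, 1, 2, 3} from by decide]; simp [Finset.sum_insert, add_assoc]
  rw [pos, h]

lemma normle (x : ℝ) (z : ℤ) : ‖(x : AddCircle (1:ℝ))‖ ≤ |x - z| := by
  have h : ‖(x : AddCircle (1:ℝ))‖ = |x - round x| := UnitAddCircle.norm_eq
  rw [h]; exact round_le x z

lemma normge (x : ℝ) (h0 : 0 ≤ x) (h1 : x ≤ 1) : min x (1-x) ≤ ‖(x : AddCircle (1:ℝ))‖ := by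
  have h : ‖(x : AddCircle (1:ℝ))‖ = |x - round x| := UnitAddCircle.norm_eq
  rw [h]
  rcases le_or_gt ((round x : ℤ) : ℝ) 0 with hr | hr
  · have h2 : x - round x = |x - round x| := (abs_of_nonneg (by linarith)).symm
    have h3 := min_le_left x (1-x)
    linarith
  · have h1' : (1:ℝ) ≤ ((round x : ℤ) : ℝ) := by exact_mod_cast (by exact_mod_cast hr : (0:ℤ) < round x)
    have h2 : (round x : ℝ) - x = |x - round x| := by
      rw [abs_sub_comm]; exact (abs_of_nonneg (by linarith)).symm
    have h3 := min_le_right x (1-x)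
    linarith

lemma distcoe (x y : ℝ) : dist ((x : ℝ) : AddCircle (1:ℝ)) ((y:ℝ) : AddCircle (1:ℝ)) = ‖((x - y : ℝ) : AddCircle (1:ℝ))‖ := by
  rw [dist_eq_norm]; norm_cast

lemma distcoe' (x y : ℝ) : dist ((x : ℝ) : AddCircle (1:ℝ)) ((y:ℝ) : AddCircle (1:ℝ)) = ‖((y - x : ℝ) : AddCircle (1:ℝ))‖ := by
  rw [dist_comm, distcoe]

lemma dub0 (x y c : ℝ) (h1 : x - y ≤ c) (h2 : y - x ≤ c) :
    dist ((x : ℝ) : AddCircle (1:ℝ)) ((y:ℝ) : AddCircle (1:ℝ)) ≤ c := by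
  rw [distcoe]
  refine le_trans (normle _ 0) ?_
  rw [abs_le]; push_cast; constructor <;> linarith

lemma dub1 (x y c : ℝ) (h1 : x - y - 1 ≤ c) (h2 : 1 - (x - y) ≤ c) :
    dist ((x : ℝ) : AddCircle (1:ℝ)) ((y:ℝ) : AddCircle (1:ℝ)) ≤ c := by
  rw [distcoe]
  refine le_trans (normle _ 1) ?_
  rw [abs_le]; push_cast; constructor <;> linarith

lemma dubm1 (x y c : ℝ) (h1 : x - y + 1 ≤ c) (h2 : -(x - y + 1) ≤ c) :
    dist ((x : ℝ) : AddCircle (1:ℝ)) ((y:ℝ) : AddCircle (1:ℝ)) ≤ c := by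
  rw [distcoe]
  refine le_trans (normle _ (-1)) ?_
  rw [abs_le]; push_cast; constructor <;> linarith

lemma dlbL (x y m : ℝ) (h0 : 0 ≤ y - x) (h1 : y - x ≤ 1) (hm1 : m ≤ y - x) (hm2 : m ≤ 1 - (y - x)) :
    m ≤ dist ((x : ℝ) : AddCircle (1:ℝ)) ((y:ℝ) : AddCircle (1:ℝ)) := by
  rw [distcoe']
  exact le_trans (le_min hm1 hm2) (normge _ h0 h1)

lemma dlbR (x y m : ℝ) (h0 : 0 ≤ x - y) (h1 : x - y ≤ 1) (hm1 : m ≤ x - y) (hm2 : m ≤ 1 - (x - y)) :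
    m ≤ dist ((x : ℝ) : AddCircle (1:ℝ)) ((y:ℝ) : AddCircle (1:ℝ)) := by
  rw [distcoe]
  exact le_trans (le_min hm1 hm2) (normge _ h0 h1)

set_option maxHeartbeats 4000000 in
lemma core (ε u e0 e1 e2 e3 e4 : ℝ) (hε0 : 0 ≤ ε) (hε : ε < 2/5)
    (ha0 : |e0 - 1/5| ≤ ε) (ha1 : |e1 - 1/5| ≤ ε) (ha2 : |e2 - 1/5| ≤ ε)
    (ha3 : |e3 - 1/5| ≤ ε) (ha4 : |e4 - 1/5| ≤ ε)
    (hn0 : 0 ≤ e0) (hn1 : 0 ≤ e1) (hn2 : 0 ≤ e2) (hn3 : 0 ≤ e3) (hn4 : 0 ≤ e4)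
    (hsum : e0 + e1 + e2 + e3 + e4 = 1)
    (hu0 : 0 ≤ u) (hu1 : u ≤ e0) :
    6/5 - 3*ε ≤ min u (1 - u) + min (e0 - u) (1 - (e0 - u)) + min (e0 + e1 - u) (1 - (e0 + e1 - u)) + min (e0 + e1 + e2 - u) (1 - (e0 + e1 + e2 - u)) + min (e0 + e1 + e2 + e3 - u) (1 - (e0 + e1 + e2 + e3 - u)) := by
  rw [abs_le] at ha0 ha1 ha2 ha3 ha4
  obtain ⟨ha0l, ha0r⟩ := ha0
  obtain ⟨ha1l, ha1r⟩ := ha1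
  obtain ⟨ha2l, ha2r⟩ := ha2
  obtain ⟨ha3l, ha3r⟩ := ha3
  obtain ⟨ha4l, ha4r⟩ := ha4
  rcases min_cases u (1 - u) with ⟨m0, m0'⟩ | ⟨m0, m0'⟩ <;>
  rcases min_cases (e0 - u) (1 - (e0 - u)) with ⟨m1, m1'⟩ | ⟨m1, m1'⟩ <;>
  rcases min_cases (e0 + e1 - u) (1 - (e0 + e1 - u)) with ⟨m2, m2'⟩ | ⟨m2, m2'⟩ <;>
  rcases min_cases (e0 + e1 + e2 - u) (1 - (e0 + e1 + e2 - u)) with ⟨m3, m3'⟩ | ⟨m3, m3'⟩ <;>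
  rcases min_cases (e0 + e1 + e2 + e3 - u) (1 - (e0 + e1 + e2 + e3 - u)) with ⟨m4, m4'⟩ | ⟨m4, m4'⟩ <;>
  linarith

set_option maxHeartbeats 1000000 in
lemma pcd_le (ε : ℝ) (hε0 : 0 ≤ ε) (hε : ε < 2/5) (d : Fin 5 → ℝ)
    (hd : ∀ i, 0 ≤ d i) (hsum : ∑ i, d i = 1) :
    PCD d ≤ 6/5 := by
  have hs : d 0 + d 1 + d 2 + d 3 + d 4 = 1 := by
    have := hsum; rwa [Fin.sum_univ_five] at this
  have hd0 := hd 0; have hd1 := hd 1; have hd2 := hd 2; have hd3 := hd 3; have hd4 := hd 4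
  have b10 : dist (pos d 1) (pos d 0) ≤ d 0 := by
    rw [pos1, pos0]
    exact dub0 _ _ _ (by linarith) (by linarith)
  have b20 : dist (pos d 2) (pos d 0) ≤ d 0 + d 1 := by
    rw [pos2, pos0]
    exact dub0 _ _ _ (by linarith) (by linarith)
  have b30 : dist (pos d 3) (pos d 0) ≤ d 3 + d 4 := by
    rw [pos3, pos0]
    exact dub1 _ _ _ (by linarith) (by linarith)
  have b40 : dist (pos d 4) (pos d 0) ≤ d 4 := by
    rw [pos4, pos0]
    exact dub1 _ _ _ (by linarith) (by linarith)
  have b01 : dist (pos d 0) (pos d 1) ≤ d 0 := by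
    rw [pos0, pos1]
    exact dub0 _ _ _ (by linarith) (by linarith)
  have b21 : dist (pos d 2) (pos d 1) ≤ d 1 := by
    rw [pos2, pos1]
    exact dub0 _ _ _ (by linarith) (by linarith)
  have b31 : dist (pos d 3) (pos d 1) ≤ d 1 + d 2 := by
    rw [pos3, pos1]
    exact dub0 _ _ _ (by linarith) (by linarith)
  have b41 : dist (pos d 4) (pos d 1) ≤ d 4 + d 0 := by
    rw [pos4, pos1]
    exact dub1 _ _ _ (by linarith) (by linarith)
  have b02 : dist (pos d 0) (pos d 2) ≤ d 0 + d 1 := by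
    rw [pos0, pos2]
    exact dub0 _ _ _ (by linarith) (by linarith)
  have b12 : dist (pos d 1) (pos d 2) ≤ d 1 := by
    rw [pos1, pos2]
    exact dub0 _ _ _ (by linarith) (by linarith)
  have b32 : dist (pos d 3) (pos d 2) ≤ d 2 := by
    rw [pos3, pos2]
    exact dub0 _ _ _ (by linarith) (by linarith)
  have b42 : dist (pos d 4) (pos d 2) ≤ d 2 + d 3 := by
    rw [pos4, pos2]
    exact dub0 _ _ _ (by linarith) (by linarith)
  have b03 : dist (pos d 0) (pos d 3) ≤ d 3 + d 4 := by
    rw [pos0, pos3]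
    exact dubm1 _ _ _ (by linarith) (by linarith)
  have b13 : dist (pos d 1) (pos d 3) ≤ d 1 + d 2 := by
    rw [pos1, pos3]
    exact dub0 _ _ _ (by linarith) (by linarith)
  have b23 : dist (pos d 2) (pos d 3) ≤ d 2 := by
    rw [pos2, pos3]
    exact dub0 _ _ _ (by linarith) (by linarith)
  have b43 : dist (pos d 4) (pos d 3) ≤ d 3 := by
    rw [pos4, pos3]
    exact dub0 _ _ _ (by linarith) (by linarith)
  have b04 : dist (pos d 0) (pos d 4) ≤ d 4 := by
    rw [pos0, pos4]
    exact dubm1 _ _ _ (by linarith) (by linarith)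
  have b14 : dist (pos d 1) (pos d 4) ≤ d 4 + d 0 := by
    rw [pos1, pos4]
    exact dubm1 _ _ _ (by linarith) (by linarith)
  have b24 : dist (pos d 2) (pos d 4) ≤ d 2 + d 3 := by
    rw [pos2, pos4]
    exact dub0 _ _ _ (by linarith) (by linarith)
  have b34 : dist (pos d 3) (pos d 4) ≤ d 3 := by
    rw [pos3, pos4]
    exact dub0 _ _ _ (by linarith) (by linarith)
  have hC0 : C d 0 ≤ d 0 + d 0 + d 1 + d 3 + d 4 + d 4 := by
    have hz : dist (pos d 0) (pos d 0) = 0 := dist_self _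
    have he : C d 0 = ∑ k : Fin 5, dist (pos d k) (pos d 0) := rfl
    rw [he, Fin.sum_univ_five]
    linarith [b10, b20, b30, b40]
  have hC1 : C d 1 ≤ d 0 + d 1 + d 1 + d 2 + d 4 + d 0 := by
    have hz : dist (pos d 1) (pos d 1) = 0 := dist_self _
    have he : C d 1 = ∑ k : Fin 5, dist (pos d k) (pos d 1) := rfl
    rw [he, Fin.sum_univ_five]
    linarith [b01, b21, b31, b41]
  have hC2 : C d 2 ≤ d 0 + d 1 + d 1 + d 2 + d 2 + d 3 := by
    have hz : dist (pos d 2) (pos d 2) = 0 := dist_self _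
    have he : C d 2 = ∑ k : Fin 5, dist (pos d k) (pos d 2) := rfl
    rw [he, Fin.sum_univ_five]
    linarith [b02, b12, b32, b42]
  have hC3 : C d 3 ≤ d 3 + d 4 + d 1 + d 2 + d 2 + d 3 := by
    have hz : dist (pos d 3) (pos d 3) = 0 := dist_self _
    have he : C d 3 = ∑ k : Fin 5, dist (pos d k) (pos d 3) := rfl
    rw [he, Fin.sum_univ_five]
    linarith [b03, b13, b23, b43]
  have hC4 : C d 4 ≤ d 4 + d 4 + d 0 + d 2 + d 3 + d 3 := by
    have hz : dist (pos d 4) (pos d 4) = 0 := dist_self _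
    have he : C d 4 = ∑ k : Fin 5, dist (pos d k) (pos d 4) := rfl
    rw [he, Fin.sum_univ_five]
    linarith [b04, b14, b24, b34]
  have hPe : PCD d = d 2 * C d 0 + d 3 * C d 1 + d 4 * C d 2 + d 0 * C d 3 + d 1 * C d 4 := by
    have he : PCD d = ∑ i : Fin 5, P d i * C d i := rfl
    rw [he, Fin.sum_univ_five]
    simp only [P]
    rw [show ((0:Fin 5)+2) = 2 from by decide, show ((1:Fin 5)+2) = 3 from by decide,
      show ((2:Fin 5)+2) = 4 from by decide, show ((3:Fin 5)+2) = 0 from by decide,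
      show ((4:Fin 5)+2) = 1 from by decide]
  rw [hPe]
  nlinarith [mul_le_mul_of_nonneg_left hC0 hd2, mul_le_mul_of_nonneg_left hC1 hd3,
    mul_le_mul_of_nonneg_left hC2 hd4, mul_le_mul_of_nonneg_left hC3 hd0,
    mul_le_mul_of_nonneg_left hC4 hd1,
    sq_nonneg (6*d 0 + d 1 - 4*d 2 - 4*d 3 + d 4),
    sq_nonneg (7*d 1 + 2*d 2 - 4*d 3 - 5*d 4),
    sq_nonneg (4*d 2 - d 3 - 3*d 4),
    sq_nonneg (d 3 - d 4),
    mul_nonneg hd0 hd1, mul_nonneg hd0 hd2, mul_nonneg hd3 hd4]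

set_option maxHeartbeats 4000000 in
lemma SC_ge (ε : ℝ) (hε0 : 0 ≤ ε) (hε : ε < 2/5) (d : Fin 5 → ℝ)
    (hd : ∀ i, 0 ≤ d i) (hsum : ∑ i, d i = 1)
    (hb : ∀ i, |d i - 1/5| ≤ ε) (a : AddCircle (1:ℝ)) :
    6/5 - 3*ε ≤ SC d a := by
  have hs : d 0 + d 1 + d 2 + d 3 + d 4 = 1 := by
    have := hsum; rwa [Fin.sum_univ_five] at this
  have hd0 := hd 0; have hd1 := hd 1; have hd2 := hd 2; have hd3 := hd 3; have hd4 := hd 4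
  obtain ⟨t, ht0, ht1, hta⟩ : ∃ t : ℝ, 0 ≤ t ∧ t < 1 ∧ ((t:ℝ) : AddCircle (1:ℝ)) = a := by
    refine ⟨(AddCircle.equivIco 1 0 a : ℝ), ?_, ?_, (AddCircle.equivIco 1 0).symm_apply_apply a⟩
    · have := (AddCircle.equivIco 1 0 a).2
      simpa using this.1
    · have := (AddCircle.equivIco 1 0 a).2
      simpa using this.2
  have he : SC d a = ∑ i : Fin 5, dist (pos d i) a := rfl
  rw [he, Fin.sum_univ_five, ← hta, pos0, pos1, pos2, pos3, pos4]
  rcases lt_or_ge t (d 0) with hr0 | hr0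
  · -- region 0
    have hcore := core ε t (d 0) (d 1) (d 2) (d 3) (d 4) hε0 hε (hb 0) (hb 1) (hb 2) (hb 3) (hb 4) (hd 0) (hd 1) (hd 2) (hd 3) (hd 4) (by linarith) (by linarith) (by linarith)
    have B0 : min t (1 - t) ≤ dist ((0 : ℝ) : AddCircle (1:ℝ)) ((t : ℝ) : AddCircle (1:ℝ)) :=
      dlbL _ _ _ (by linarith) (by linarith) (by linarith [min_le_left t (1 - t), min_le_right t (1 - t)]) (by linarith [min_le_left t (1 - t), min_le_right t (1 - t)])
    have B1 : min ((d 0) - t) (1 - ((d 0) - t)) ≤ dist ((d 0 : ℝ) : AddCircle (1:ℝ)) ((t : ℝ) : AddCircle (1:ℝ)) :=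
      dlbR _ _ _ (by linarith) (by linarith) (by linarith [min_le_left ((d 0) - t) (1 - ((d 0) - t)), min_le_right ((d 0) - t) (1 - ((d 0) - t))]) (by linarith [min_le_left ((d 0) - t) (1 - ((d 0) - t)), min_le_right ((d 0) - t) (1 - ((d 0) - t))])
    have B2 : min ((d 0) + (d 1) - t) (1 - ((d 0) + (d 1) - t)) ≤ dist ((d 0 + d 1 : ℝ) : AddCircle (1:ℝ)) ((t : ℝ) : AddCircle (1:ℝ)) :=
      dlbR _ _ _ (by linarith) (by linarith) (by linarith [min_le_left ((d 0) + (d 1) - t) (1 - ((d 0) + (d 1) - t)), min_le_right ((d 0) + (d 1) - t) (1 - ((d 0) + (d 1) - t))]) (by linarith [min_le_left ((d 0) + (d 1) - t) (1 - ((d 0) + (d 1) - t)), min_le_right ((d 0) + (d 1) - t) (1 - ((d 0) + (d 1) - t))])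
    have B3 : min ((d 0) + (d 1) + (d 2) - t) (1 - ((d 0) + (d 1) + (d 2) - t)) ≤ dist ((d 0 + d 1 + d 2 : ℝ) : AddCircle (1:ℝ)) ((t : ℝ) : AddCircle (1:ℝ)) :=
      dlbR _ _ _ (by linarith) (by linarith) (by linarith [min_le_left ((d 0) + (d 1) + (d 2) - t) (1 - ((d 0) + (d 1) + (d 2) - t)), min_le_right ((d 0) + (d 1) + (d 2) - t) (1 - ((d 0) + (d 1) + (d 2) - t))]) (by linarith [min_le_left ((d 0) + (d 1) + (d 2) - t) (1 - ((d 0) + (d 1) + (d 2) - t)), min_le_right ((d 0) + (d 1) + (d 2) - t) (1 - ((d 0) + (d 1) + (d 2) - t))])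
    have B4 : min ((d 0) + (d 1) + (d 2) + (d 3) - t) (1 - ((d 0) + (d 1) + (d 2) + (d 3) - t)) ≤ dist ((d 0 + d 1 + d 2 + d 3 : ℝ) : AddCircle (1:ℝ)) ((t : ℝ) : AddCircle (1:ℝ)) :=
      dlbR _ _ _ (by linarith) (by linarith) (by linarith [min_le_left ((d 0) + (d 1) + (d 2) + (d 3) - t) (1 - ((d 0) + (d 1) + (d 2) + (d 3) - t)), min_le_right ((d 0) + (d 1) + (d 2) + (d 3) - t) (1 - ((d 0) + (d 1) + (d 2) + (d 3) - t))]) (by linarith [min_le_left ((d 0) + (d 1) + (d 2) + (d 3) - t) (1 - ((d 0) + (d 1) + (d 2) + (d 3) - t)), min_le_right ((d 0) + (d 1) + (d 2) + (d 3) - t) (1 - ((d 0) + (d 1) + (d 2) + (d 3) - t))])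
    linarith [hcore, B0, B1, B2, B3, B4]
  rcases lt_or_ge t (d 0 + d 1) with hr1 | hr1
  · -- region 1
    have hcore := core ε (t - (d 0)) (d 1) (d 2) (d 3) (d 4) (d 0) hε0 hε (hb 1) (hb 2) (hb 3) (hb 4) (hb 0) (hd 1) (hd 2) (hd 3) (hd 4) (hd 0) (by linarith) (by linarith) (by linarith)
    have B0 : min (t - (d 0)) (1 - (t - (d 0))) ≤ dist ((d 0 : ℝ) : AddCircle (1:ℝ)) ((t : ℝ) : AddCircle (1:ℝ)) :=
      dlbL _ _ _ (by linarith) (by linarith) (by linarith [min_le_left (t - (d 0)) (1 - (t - (d 0))), min_le_right (t - (d 0)) (1 - (t - (d 0)))]) (by linarith [min_le_left (t - (d 0)) (1 - (t - (d 0))), min_le_right (t - (d 0)) (1 - (t - (d 0)))])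
    have B1 : min ((d 1) - (t - (d 0))) (1 - ((d 1) - (t - (d 0)))) ≤ dist ((d 0 + d 1 : ℝ) : AddCircle (1:ℝ)) ((t : ℝ) : AddCircle (1:ℝ)) :=
      dlbR _ _ _ (by linarith) (by linarith) (by linarith [min_le_left ((d 1) - (t - (d 0))) (1 - ((d 1) - (t - (d 0)))), min_le_right ((d 1) - (t - (d 0))) (1 - ((d 1) - (t - (d 0))))]) (by linarith [min_le_left ((d 1) - (t - (d 0))) (1 - ((d 1) - (t - (d 0)))), min_le_right ((d 1) - (t - (d 0))) (1 - ((d 1) - (t - (d 0))))])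
    have B2 : min ((d 1) + (d 2) - (t - (d 0))) (1 - ((d 1) + (d 2) - (t - (d 0)))) ≤ dist ((d 0 + d 1 + d 2 : ℝ) : AddCircle (1:ℝ)) ((t : ℝ) : AddCircle (1:ℝ)) :=
      dlbR _ _ _ (by linarith) (by linarith) (by linarith [min_le_left ((d 1) + (d 2) - (t - (d 0))) (1 - ((d 1) + (d 2) - (t - (d 0)))), min_le_right ((d 1) + (d 2) - (t - (d 0))) (1 - ((d 1) + (d 2) - (t - (d 0))))]) (by linarith [min_le_left ((d 1) + (d 2) - (t - (d 0))) (1 - ((d 1) + (d 2) - (t - (d 0)))), min_le_right ((d 1) + (d 2) - (t - (d 0))) (1 - ((d 1) + (d 2) - (t - (d 0))))])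
    have B3 : min ((d 1) + (d 2) + (d 3) - (t - (d 0))) (1 - ((d 1) + (d 2) + (d 3) - (t - (d 0)))) ≤ dist ((d 0 + d 1 + d 2 + d 3 : ℝ) : AddCircle (1:ℝ)) ((t : ℝ) : AddCircle (1:ℝ)) :=
      dlbR _ _ _ (by linarith) (by linarith) (by linarith [min_le_left ((d 1) + (d 2) + (d 3) - (t - (d 0))) (1 - ((d 1) + (d 2) + (d 3) - (t - (d 0)))), min_le_right ((d 1) + (d 2) + (d 3) - (t - (d 0))) (1 - ((d 1) + (d 2) + (d 3) - (t - (d 0))))]) (by linarith [min_le_left ((d 1) + (d 2) + (d 3) - (t - (d 0))) (1 - ((d 1) + (d 2) + (d 3) - (t - (d 0)))), min_le_right ((d 1) + (d 2) + (d 3) - (t - (d 0))) (1 - ((d 1) + (d 2) + (d 3) - (t - (d 0))))])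
    have B4 : min ((d 1) + (d 2) + (d 3) + (d 4) - (t - (d 0))) (1 - ((d 1) + (d 2) + (d 3) + (d 4) - (t - (d 0)))) ≤ dist ((0 : ℝ) : AddCircle (1:ℝ)) ((t : ℝ) : AddCircle (1:ℝ)) :=
      dlbL _ _ _ (by linarith) (by linarith) (by linarith [min_le_left ((d 1) + (d 2) + (d 3) + (d 4) - (t - (d 0))) (1 - ((d 1) + (d 2) + (d 3) + (d 4) - (t - (d 0)))), min_le_right ((d 1) + (d 2) + (d 3) + (d 4) - (t - (d 0))) (1 - ((d 1) + (d 2) + (d 3) + (d 4) - (t - (d 0))))]) (by linarith [min_le_left ((d 1) + (d 2) + (d 3) + (d 4) - (t - (d 0))) (1 - ((d 1) + (d 2) + (d 3) + (d 4) - (t - (d 0)))), min_le_right ((d 1) + (d 2) + (d 3) + (d 4) - (t - (d 0))) (1 - ((d 1) + (d 2) + (d 3) + (d 4) - (t - (d 0))))])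
    linarith [hcore, B0, B1, B2, B3, B4]
  rcases lt_or_ge t (d 0 + d 1 + d 2) with hr2 | hr2
  · -- region 2
    have hcore := core ε (t - (d 0 + d 1)) (d 2) (d 3) (d 4) (d 0) (d 1) hε0 hε (hb 2) (hb 3) (hb 4) (hb 0) (hb 1) (hd 2) (hd 3) (hd 4) (hd 0) (hd 1) (by linarith) (by linarith) (by linarith)
    have B0 : min (t - (d 0 + d 1)) (1 - (t - (d 0 + d 1))) ≤ dist ((d 0 + d 1 : ℝ) : AddCircle (1:ℝ)) ((t : ℝ) : AddCircle (1:ℝ)) :=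
      dlbL _ _ _ (by linarith) (by linarith) (by linarith [min_le_left (t - (d 0 + d 1)) (1 - (t - (d 0 + d 1))), min_le_right (t - (d 0 + d 1)) (1 - (t - (d 0 + d 1)))]) (by linarith [min_le_left (t - (d 0 + d 1)) (1 - (t - (d 0 + d 1))), min_le_right (t - (d 0 + d 1)) (1 - (t - (d 0 + d 1)))])
    have B1 : min ((d 2) - (t - (d 0 + d 1))) (1 - ((d 2) - (t - (d 0 + d 1)))) ≤ dist ((d 0 + d 1 + d 2 : ℝ) : AddCircle (1:ℝ)) ((t : ℝ) : AddCircle (1:ℝ)) :=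
      dlbR _ _ _ (by linarith) (by linarith) (by linarith [min_le_left ((d 2) - (t - (d 0 + d 1))) (1 - ((d 2) - (t - (d 0 + d 1)))), min_le_right ((d 2) - (t - (d 0 + d 1))) (1 - ((d 2) - (t - (d 0 + d 1))))]) (by linarith [min_le_left ((d 2) - (t - (d 0 + d 1))) (1 - ((d 2) - (t - (d 0 + d 1)))), min_le_right ((d 2) - (t - (d 0 + d 1))) (1 - ((d 2) - (t - (d 0 + d 1))))])
    have B2 : min ((d 2) + (d 3) - (t - (d 0 + d 1))) (1 - ((d 2) + (d 3) - (t - (d 0 + d 1)))) ≤ dist ((d 0 + d 1 + d 2 + d 3 : ℝ) : AddCircle (1:ℝ)) ((t : ℝ) : AddCircle (1:ℝ)) :=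
      dlbR _ _ _ (by linarith) (by linarith) (by linarith [min_le_left ((d 2) + (d 3) - (t - (d 0 + d 1))) (1 - ((d 2) + (d 3) - (t - (d 0 + d 1)))), min_le_right ((d 2) + (d 3) - (t - (d 0 + d 1))) (1 - ((d 2) + (d 3) - (t - (d 0 + d 1))))]) (by linarith [min_le_left ((d 2) + (d 3) - (t - (d 0 + d 1))) (1 - ((d 2) + (d 3) - (t - (d 0 + d 1)))), min_le_right ((d 2) + (d 3) - (t - (d 0 + d 1))) (1 - ((d 2) + (d 3) - (t - (d 0 + d 1))))])
    have B3 : min ((d 2) + (d 3) + (d 4) - (t - (d 0 + d 1))) (1 - ((d 2) + (d 3) + (d 4) - (t - (d 0 + d 1)))) ≤ dist ((0 : ℝ) : AddCircle (1:ℝ)) ((t : ℝ) : AddCircle (1:ℝ)) :=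
      dlbL _ _ _ (by linarith) (by linarith) (by linarith [min_le_left ((d 2) + (d 3) + (d 4) - (t - (d 0 + d 1))) (1 - ((d 2) + (d 3) + (d 4) - (t - (d 0 + d 1)))), min_le_right ((d 2) + (d 3) + (d 4) - (t - (d 0 + d 1))) (1 - ((d 2) + (d 3) + (d 4) - (t - (d 0 + d 1))))]) (by linarith [min_le_left ((d 2) + (d 3) + (d 4) - (t - (d 0 + d 1))) (1 - ((d 2) + (d 3) + (d 4) - (t - (d 0 + d 1)))), min_le_right ((d 2) + (d 3) + (d 4) - (t - (d 0 + d 1))) (1 - ((d 2) + (d 3) + (d 4) - (t - (d 0 + d 1))))])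
    have B4 : min ((d 2) + (d 3) + (d 4) + (d 0) - (t - (d 0 + d 1))) (1 - ((d 2) + (d 3) + (d 4) + (d 0) - (t - (d 0 + d 1)))) ≤ dist ((d 0 : ℝ) : AddCircle (1:ℝ)) ((t : ℝ) : AddCircle (1:ℝ)) :=
      dlbL _ _ _ (by linarith) (by linarith) (by linarith [min_le_left ((d 2) + (d 3) + (d 4) + (d 0) - (t - (d 0 + d 1))) (1 - ((d 2) + (d 3) + (d 4) + (d 0) - (t - (d 0 + d 1)))), min_le_right ((d 2) + (d 3) + (d 4) + (d 0) - (t - (d 0 + d 1))) (1 - ((d 2) + (d 3) + (d 4) + (d 0) - (t - (d 0 + d 1))))]) (by linarith [min_le_left ((d 2) + (d 3) + (d 4) + (d 0) - (t - (d 0 + d 1))) (1 - ((d 2) + (d 3) + (d 4) + (d 0) - (t - (d 0 + d 1)))), min_le_right ((d 2) + (d 3) + (d 4) + (d 0) - (t - (d 0 + d 1))) (1 - ((d 2) + (d 3) + (d 4) + (d 0) - (t - (d 0 + d 1))))])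
    linarith [hcore, B0, B1, B2, B3, B4]
  rcases lt_or_ge t (d 0 + d 1 + d 2 + d 3) with hr3 | hr3
  · -- region 3
    have hcore := core ε (t - (d 0 + d 1 + d 2)) (d 3) (d 4) (d 0) (d 1) (d 2) hε0 hε (hb 3) (hb 4) (hb 0) (hb 1) (hb 2) (hd 3) (hd 4) (hd 0) (hd 1) (hd 2) (by linarith) (by linarith) (by linarith)
    have B0 : min (t - (d 0 + d 1 + d 2)) (1 - (t - (d 0 + d 1 + d 2))) ≤ dist ((d 0 + d 1 + d 2 : ℝ) : AddCircle (1:ℝ)) ((t : ℝ) : AddCircle (1:ℝ)) :=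
      dlbL _ _ _ (by linarith) (by linarith) (by linarith [min_le_left (t - (d 0 + d 1 + d 2)) (1 - (t - (d 0 + d 1 + d 2))), min_le_right (t - (d 0 + d 1 + d 2)) (1 - (t - (d 0 + d 1 + d 2)))]) (by linarith [min_le_left (t - (d 0 + d 1 + d 2)) (1 - (t - (d 0 + d 1 + d 2))), min_le_right (t - (d 0 + d 1 + d 2)) (1 - (t - (d 0 + d 1 + d 2)))])
    have B1 : min ((d 3) - (t - (d 0 + d 1 + d 2))) (1 - ((d 3) - (t - (d 0 + d 1 + d 2)))) ≤ dist ((d 0 + d 1 + d 2 + d 3 : ℝ) : AddCircle (1:ℝ)) ((t : ℝ) : AddCircle (1:ℝ)) :=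
      dlbR _ _ _ (by linarith) (by linarith) (by linarith [min_le_left ((d 3) - (t - (d 0 + d 1 + d 2))) (1 - ((d 3) - (t - (d 0 + d 1 + d 2)))), min_le_right ((d 3) - (t - (d 0 + d 1 + d 2))) (1 - ((d 3) - (t - (d 0 + d 1 + d 2))))]) (by linarith [min_le_left ((d 3) - (t - (d 0 + d 1 + d 2))) (1 - ((d 3) - (t - (d 0 + d 1 + d 2)))), min_le_right ((d 3) - (t - (d 0 + d 1 + d 2))) (1 - ((d 3) - (t - (d 0 + d 1 + d 2))))])
    have B2 : min ((d 3) + (d 4) - (t - (d 0 + d 1 + d 2))) (1 - ((d 3) + (d 4) - (t - (d 0 + d 1 + d 2)))) ≤ dist ((0 : ℝ) : AddCircle (1:ℝ)) ((t : ℝ) : AddCircle (1:ℝ)) :=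
      dlbL _ _ _ (by linarith) (by linarith) (by linarith [min_le_left ((d 3) + (d 4) - (t - (d 0 + d 1 + d 2))) (1 - ((d 3) + (d 4) - (t - (d 0 + d 1 + d 2)))), min_le_right ((d 3) + (d 4) - (t - (d 0 + d 1 + d 2))) (1 - ((d 3) + (d 4) - (t - (d 0 + d 1 + d 2))))]) (by linarith [min_le_left ((d 3) + (d 4) - (t - (d 0 + d 1 + d 2))) (1 - ((d 3) + (d 4) - (t - (d 0 + d 1 + d 2)))), min_le_right ((d 3) + (d 4) - (t - (d 0 + d 1 + d 2))) (1 - ((d 3) + (d 4) - (t - (d 0 + d 1 + d 2))))])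
    have B3 : min ((d 3) + (d 4) + (d 0) - (t - (d 0 + d 1 + d 2))) (1 - ((d 3) + (d 4) + (d 0) - (t - (d 0 + d 1 + d 2)))) ≤ dist ((d 0 : ℝ) : AddCircle (1:ℝ)) ((t : ℝ) : AddCircle (1:ℝ)) :=
      dlbL _ _ _ (by linarith) (by linarith) (by linarith [min_le_left ((d 3) + (d 4) + (d 0) - (t - (d 0 + d 1 + d 2))) (1 - ((d 3) + (d 4) + (d 0) - (t - (d 0 + d 1 + d 2)))), min_le_right ((d 3) + (d 4) + (d 0) - (t - (d 0 + d 1 + d 2))) (1 - ((d 3) + (d 4) + (d 0) - (t - (d 0 + d 1 + d 2))))]) (by linarith [min_le_left ((d 3) + (d 4) + (d 0) - (t - (d 0 + d 1 + d 2))) (1 - ((d 3) + (d 4) + (d 0) - (t - (d 0 + d 1 + d 2)))), min_le_right ((d 3) + (d 4) + (d 0) - (t - (d 0 + d 1 + d 2))) (1 - ((d 3) + (d 4) + (d 0) - (t - (d 0 + d 1 + d 2))))])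
    have B4 : min ((d 3) + (d 4) + (d 0) + (d 1) - (t - (d 0 + d 1 + d 2))) (1 - ((d 3) + (d 4) + (d 0) + (d 1) - (t - (d 0 + d 1 + d 2)))) ≤ dist ((d 0 + d 1 : ℝ) : AddCircle (1:ℝ)) ((t : ℝ) : AddCircle (1:ℝ)) :=
      dlbL _ _ _ (by linarith) (by linarith) (by linarith [min_le_left ((d 3) + (d 4) + (d 0) + (d 1) - (t - (d 0 + d 1 + d 2))) (1 - ((d 3) + (d 4) + (d 0) + (d 1) - (t - (d 0 + d 1 + d 2)))), min_le_right ((d 3) + (d 4) + (d 0) + (d 1) - (t - (d 0 + d 1 + d 2))) (1 - ((d 3) + (d 4) + (d 0) + (d 1) - (t - (d 0 + d 1 + d 2))))]) (by linarith [min_le_left ((d 3) + (d 4) + (d 0) + (d 1) - (t - (d 0 + d 1 + d 2))) (1 - ((d 3) + (d 4) + (d 0) + (d 1) - (t - (d 0 + d 1 + d 2)))), min_le_right ((d 3) + (d 4) + (d 0) + (d 1) - (t - (d 0 + d 1 + d 2))) (1 - ((d 3) + (d 4) + (d 0) + (d 1) - (t - (d 0 + d 1 + d 2))))])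
    linarith [hcore, B0, B1, B2, B3, B4]
  -- region 4
  have hcore := core ε (t - (d 0 + d 1 + d 2 + d 3)) (d 4) (d 0) (d 1) (d 2) (d 3) hε0 hε (hb 4) (hb 0) (hb 1) (hb 2) (hb 3) (hd 4) (hd 0) (hd 1) (hd 2) (hd 3) (by linarith) (by linarith) (by linarith)
  have B0 : min (t - (d 0 + d 1 + d 2 + d 3)) (1 - (t - (d 0 + d 1 + d 2 + d 3))) ≤ dist ((d 0 + d 1 + d 2 + d 3 : ℝ) : AddCircle (1:ℝ)) ((t : ℝ) : AddCircle (1:ℝ)) :=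
    dlbL _ _ _ (by linarith) (by linarith) (by linarith [min_le_left (t - (d 0 + d 1 + d 2 + d 3)) (1 - (t - (d 0 + d 1 + d 2 + d 3))), min_le_right (t - (d 0 + d 1 + d 2 + d 3)) (1 - (t - (d 0 + d 1 + d 2 + d 3)))]) (by linarith [min_le_left (t - (d 0 + d 1 + d 2 + d 3)) (1 - (t - (d 0 + d 1 + d 2 + d 3))), min_le_right (t - (d 0 + d 1 + d 2 + d 3)) (1 - (t - (d 0 + d 1 + d 2 + d 3)))])
  have B1 : min ((d 4) - (t - (d 0 + d 1 + d 2 + d 3))) (1 - ((d 4) - (t - (d 0 + d 1 + d 2 + d 3)))) ≤ dist ((0 : ℝ) : AddCircle (1:ℝ)) ((t : ℝ) : AddCircle (1:ℝ)) :=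
    dlbL _ _ _ (by linarith) (by linarith) (by linarith [min_le_left ((d 4) - (t - (d 0 + d 1 + d 2 + d 3))) (1 - ((d 4) - (t - (d 0 + d 1 + d 2 + d 3)))), min_le_right ((d 4) - (t - (d 0 + d 1 + d 2 + d 3))) (1 - ((d 4) - (t - (d 0 + d 1 + d 2 + d 3))))]) (by linarith [min_le_left ((d 4) - (t - (d 0 + d 1 + d 2 + d 3))) (1 - ((d 4) - (t - (d 0 + d 1 + d 2 + d 3)))), min_le_right ((d 4) - (t - (d 0 + d 1 + d 2 + d 3))) (1 - ((d 4) - (t - (d 0 + d 1 + d 2 + d 3))))])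
  have B2 : min ((d 4) + (d 0) - (t - (d 0 + d 1 + d 2 + d 3))) (1 - ((d 4) + (d 0) - (t - (d 0 + d 1 + d 2 + d 3)))) ≤ dist ((d 0 : ℝ) : AddCircle (1:ℝ)) ((t : ℝ) : AddCircle (1:ℝ)) :=
    dlbL _ _ _ (by linarith) (by linarith) (by linarith [min_le_left ((d 4) + (d 0) - (t - (d 0 + d 1 + d 2 + d 3))) (1 - ((d 4) + (d 0) - (t - (d 0 + d 1 + d 2 + d 3)))), min_le_right ((d 4) + (d 0) - (t - (d 0 + d 1 + d 2 + d 3))) (1 - ((d 4) + (d 0) - (t - (d 0 + d 1 + d 2 + d 3))))]) (by linarith [min_le_left ((d 4) + (d 0) - (t - (d 0 + d 1 + d 2 + d 3))) (1 - ((d 4) + (d 0) - (t - (d 0 + d 1 + d 2 + d 3)))), min_le_right ((d 4) + (d 0) - (t - (d 0 + d 1 + d 2 + d 3))) (1 - ((d 4) + (d 0) - (t - (d 0 + d 1 + d 2 + d 3))))])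
  have B3 : min ((d 4) + (d 0) + (d 1) - (t - (d 0 + d 1 + d 2 + d 3))) (1 - ((d 4) + (d 0) + (d 1) - (t - (d 0 + d 1 + d 2 + d 3)))) ≤ dist ((d 0 + d 1 : ℝ) : AddCircle (1:ℝ)) ((t : ℝ) : AddCircle (1:ℝ)) :=
    dlbL _ _ _ (by linarith) (by linarith) (by linarith [min_le_left ((d 4) + (d 0) + (d 1) - (t - (d 0 + d 1 + d 2 + d 3))) (1 - ((d 4) + (d 0) + (d 1) - (t - (d 0 + d 1 + d 2 + d 3)))), min_le_right ((d 4) + (d 0) + (d 1) - (t - (d 0 + d 1 + d 2 + d 3))) (1 - ((d 4) + (d 0) + (d 1) - (t - (d 0 + d 1 + d 2 + d 3))))]) (by linarith [min_le_left ((d 4) + (d 0) + (d 1) - (t - (d 0 + d 1 + d 2 + d 3))) (1 - ((d 4) + (d 0) + (d 1) - (t - (d 0 + d 1 + d 2 + d 3)))), min_le_right ((d 4) + (d 0) + (d 1) - (t - (d 0 + d 1 + d 2 + d 3))) (1 - ((d 4) + (d 0) + (d 1) - (t - (d 0 + d 1 + d 2 + d 3))))])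
  have B4 : min ((d 4) + (d 0) + (d 1) + (d 2) - (t - (d 0 + d 1 + d 2 + d 3))) (1 - ((d 4) + (d 0) + (d 1) + (d 2) - (t - (d 0 + d 1 + d 2 + d 3)))) ≤ dist ((d 0 + d 1 + d 2 : ℝ) : AddCircle (1:ℝ)) ((t : ℝ) : AddCircle (1:ℝ)) :=
    dlbL _ _ _ (by linarith) (by linarith) (by linarith [min_le_left ((d 4) + (d 0) + (d 1) + (d 2) - (t - (d 0 + d 1 + d 2 + d 3))) (1 - ((d 4) + (d 0) + (d 1) + (d 2) - (t - (d 0 + d 1 + d 2 + d 3)))), min_le_right ((d 4) + (d 0) + (d 1) + (d 2) - (t - (d 0 + d 1 + d 2 + d 3))) (1 - ((d 4) + (d 0) + (d 1) + (d 2) - (t - (d 0 + d 1 + d 2 + d 3))))]) (by linarith [min_le_left ((d 4) + (d 0) + (d 1) + (d 2) - (t - (d 0 + d 1 + d 2 + d 3))) (1 - ((d 4) + (d 0) + (d 1) + (d 2) - (t - (d 0 + d 1 + d 2 + d 3)))), min_le_right ((d 4) + (d 0) + (d 1) + (d 2) - (t - (d 0 + d 1 + d 2 + d 3))) (1 - ((d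 4) + (d 0) + (d 1) + (d 2) - (t - (d 0 + d 1 + d 2 + d 3))))])
  linarith [hcore, B0, B1, B2, B3, B4]

theorem near_equidistant (ε : ℝ) (hε0 : 0 ≤ ε) (hε : ε < 2 / 5)
    (d : Fin 5 → ℝ) (hd : ∀ i, 0 ≤ d i) (hsum : ∑ i, d i = 1)
    (hP : ∀ i, |P d i - 1 / 5| ≤ ε) :
    PCD d ≤ (6 / 5) / (6 / 5 - 3 * ε) * OPT d := by
  have hb : ∀ j, |d j - 1/5| ≤ ε := by
    intro j
    have h := hP (j - 2)
    have e : (j - 2) + 2 = j := sub_add_cancel j 2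
    simp only [P] at h
    rwa [e] at h
  have h1 : PCD d ≤ 6/5 := pcd_le ε hε0 (by linarith) d hd hsum
  have h2 : 6/5 - 3*ε ≤ OPT d := le_ciInf (SC_ge ε hε0 (by linarith) d hd hsum hb)
  have hpos : 0 < 6/5 - 3*ε := by linarith
  have hkey : (6:ℝ)/5 = (6/5)/(6/5-3*ε) * (6/5-3*ε) := (div_mul_cancel₀ _ hpos.ne').symm
  calc PCD d ≤ 6/5 := h1
    _ = (6/5)/(6/5-3*ε) * (6/5-3*ε) := hkey
    _ ≤ (6 / 5) / (6 / 5 - 3 * ε) * OPT d := by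
        apply mul_le_mul_of_nonneg_left h2
        positivity
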